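/- arXiv:2012.05285 — 3 statements merged into one kernel-verified Lean document; each statement's English description precedes it below -/
import Mathlib

section
/- Every metric space with exactly three points is of negative type: for all n ∈ ℤ⁺ and all x₁,…,xₙ, y₁,…,yₙ in the space, 2 ∑_{i,j} d(xᵢ,yⱼ) ≥ ∑_{i,j} (d(xᵢ,xⱼ) + d(yᵢ,yⱼ)). -/
open Finset

lemma three_pt_quad_form {𝒳 : Type*} [MetricSpace 𝒳] [Fintype 𝒳]
    (h3 : Fintype.card 𝒳 = 3) (g : 𝒳 → ℝ) (hg : ∑ u, g u = 0) :
    ∑ u, ∑ v, g u * g v * dist u v ≤ 0 := by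
  have e : 𝒳 ≃ Fin 3 := Fintype.equivFinOfCardEq h3
  have hsum : ∀ F : 𝒳 → ℝ, ∑ u, F u = ∑ i : Fin 3, F (e.symm i) := fun F =>
    (Equiv.sum_comp e.symm F).symm
  set a := e.symm 0
  set b := e.symm 1
  set c := e.symm 2
  have hrw : ∑ u, ∑ v, g u * g v * dist u v =
      ∑ i : Fin 3, ∑ j : Fin 3,
        g (e.symm i) * g (e.symm j) * dist (e.symm i) (e.symm j) := by
    rw [hsum (fun u => ∑ v, g u * g v * dist u v)]
    exact Finset.sum_congr rfl fun i _ => hsum _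
  rw [hrw]
  have hg' : g a + g b + g c = 0 := by
    rw [hsum g] at hg; simpa [Fin.sum_univ_three] using hg
  simp only [Fin.sum_univ_three]
  simp only [show e.symm 0 = a from rfl, show e.symm 1 = b from rfl,
    show e.symm 2 = c from rfl]
  have daa : dist a a = 0 := dist_self a
  have dbb : dist b b = 0 := dist_self b
  have dcc : dist c c = 0 := dist_self c
  have dba : dist b a = dist a b := dist_comm b a
  have dca : dist c a = dist a c := dist_comm c a
  have dcb : dist c b = dist b c := dist_comm c b
  have t1 : dist a c + dist b c - dist a b ≥ 0 := by
    have := dist_triangle a c b; rw [dist_comm c b] at this; linarith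
  have t2 : dist a c - dist b c + dist a b ≥ 0 := by
    have := dist_triangle b a c; rw [dist_comm b a] at this; linarith
  have t3 : dist b c - dist a c + dist a b ≥ 0 := by
    have := dist_triangle a b c; linarith
  have hc : g c = -(g a + g b) := by linarith
  simp only [daa, dbb, dcc, dba, dca, dcb, hc]
  nlinarith [mul_nonneg (sq_nonneg (g a)) t2, mul_nonneg (sq_nonneg (g b)) t3,
    mul_nonneg (sq_nonneg (g a + g b)) t1]

/-- Every metric space with exactly three points is of negative type. -/
theorem three_point_space_negative_type
    {𝒳 : Type*} [MetricSpace 𝒳] (hcard : Nat.card 𝒳 = 3) :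
    ∀ n : ℕ, 0 < n → ∀ x y : Fin n → 𝒳,
      2 * ∑ i, ∑ j, dist (x i) (y j) ≥
        ∑ i, ∑ j, (dist (x i) (x j) + dist (y i) (y j)) := by
  have hfin : Finite 𝒳 := Nat.finite_of_card_ne_zero (by omega)
  have : Fintype 𝒳 := Fintype.ofFinite 𝒳
  have : DecidableEq 𝒳 := Classical.decEq _
  have h3 : Fintype.card 𝒳 = 3 := by rwa [← Nat.card_eq_fintype_card]
  intro n hn x y
  set cnt : (Fin n → 𝒳) → 𝒳 → ℝ :=
    fun z u => ((univ.filter (fun i => z i = u)).card : ℝ) with hcnt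
  have key : ∀ (z : Fin n → 𝒳) (f : 𝒳 → ℝ),
      ∑ i, f (z i) = ∑ u, cnt z u * f u := by
    intro z f
    rw [← Finset.sum_fiberwise univ z (fun i => f (z i))]
    refine Finset.sum_congr rfl fun u _ => ?_
    have : ∑ i ∈ univ.filter (fun i => z i = u), f (z i)
        = ∑ i ∈ univ.filter (fun i => z i = u), f u := by
      refine Finset.sum_congr rfl fun i hi => ?_
      rw [(Finset.mem_filter.1 hi).2]
    rw [this, Finset.sum_const, nsmul_eq_mul, hcnt]
  have hxy : ∑ i, ∑ j, dist (x i) (y j)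
      = ∑ u, ∑ v, cnt x u * cnt y v * dist u v := by
    rw [key x (fun u => ∑ j, dist u (y j))]
    refine Finset.sum_congr rfl fun u _ => ?_
    rw [key y (fun v => dist u v), Finset.mul_sum]
    exact Finset.sum_congr rfl fun v _ => by ring
  have hxx : ∑ i, ∑ j, dist (x i) (x j)
      = ∑ u, ∑ v, cnt x u * cnt x v * dist u v := by
    rw [key x (fun u => ∑ j, dist u (x j))]
    refine Finset.sum_congr rfl fun u _ => ?_
    rw [key x (fun v => dist u v), Finset.mul_sum]
    exact Finset.sum_congr rfl fun v _ => by ring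
  have hyy : ∑ i, ∑ j, dist (y i) (y j)
      = ∑ u, ∑ v, cnt y u * cnt y v * dist u v := by
    rw [key y (fun u => ∑ j, dist u (y j))]
    refine Finset.sum_congr rfl fun u _ => ?_
    rw [key y (fun v => dist u v), Finset.mul_sum]
    exact Finset.sum_congr rfl fun v _ => by ring
  have hgsum : ∑ u, (cnt x u - cnt y u) = 0 := by
    have hx : ∑ u, cnt x u * 1 = ∑ i : Fin n, (1 : ℝ) := (key x (fun _ => 1)).symm
    have hy : ∑ u, cnt y u * 1 = ∑ i : Fin n, (1 : ℝ) := (key y (fun _ => 1)).symm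
    simp only [mul_one] at hx hy
    rw [Finset.sum_sub_distrib, hx, hy, sub_self]

  have hmain := three_pt_quad_form h3 (fun u => cnt x u - cnt y u) hgsum
  have hyx : ∑ u, ∑ v, cnt y u * cnt x v * dist u v
      = ∑ u, ∑ v, cnt x u * cnt y v * dist u v := by
    rw [Finset.sum_comm]
    refine Finset.sum_congr rfl fun u _ => Finset.sum_congr rfl fun v _ => ?_
    rw [dist_comm]; ring
  have hptw : ∀ u v : 𝒳, (cnt x u - cnt y u) * (cnt x v - cnt y v) * dist u v
      = cnt x u * cnt x v * dist u v + cnt y u * cnt y v * dist u v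
        - cnt x u * cnt y v * dist u v - cnt y u * cnt x v * dist u v := by
    intro u v; ring
  have expand : ∑ u, ∑ v, (cnt x u - cnt y u) * (cnt x v - cnt y v) * dist u v
      = ∑ u, ∑ v, cnt x u * cnt x v * dist u v
        + ∑ u, ∑ v, cnt y u * cnt y v * dist u v
        - ∑ u, ∑ v, cnt x u * cnt y v * dist u v
        - ∑ u, ∑ v, cnt y u * cnt x v * dist u v := by
    simp only [hptw, Finset.sum_sub_distrib, Finset.sum_add_distrib]
  rw [expand, hyx] at hmain
  have hsplit : ∑ i, ∑ j, (dist (x i) (x j) + dist (y i) (y j))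
      = ∑ i, ∑ j, dist (x i) (x j) + ∑ i, ∑ j, dist (y i) (y j) := by
    rw [← Finset.sum_add_distrib]
    exact Finset.sum_congr rfl fun i _ => Finset.sum_add_distrib
  rw [ge_iff_le, hsplit, hxy, hxx, hyy]
  linarith
end

section
/- Every Hilbert space H (with metric induced by its norm) is of negative type: for all n and all x₁,…,xₙ, y₁,…,yₙ ∈ H, 2∑_{i,j} ‖xᵢ − yⱼ‖ ≥ ∑_{i,j} (‖xᵢ − xⱼ‖ + ‖yᵢ − yⱼ‖). -/
open Finset MeasureTheory Set Nat

lemma gram_pow_nonneg {H : Type*} [NormedAddCommGroup H] [InnerProductSpace ℝ H]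
    {ι : Type*} [Fintype ι] (z : ι → H) (d : ι → ℝ) (k : ℕ) :
    0 ≤ ∑ i, ∑ j, d i * d j * (inner ℝ (z i) (z j) : ℝ) ^ k := by
  obtain ⟨m, a, ha⟩ : ∃ (m : ℕ) (a : Fin m → ι → ℝ),
      ∀ i j, (inner ℝ (z i) (z j) : ℝ) = ∑ r, a r i * a r j := by
    set S := Submodule.span ℝ (Set.range z)
    have : FiniteDimensional ℝ S := FiniteDimensional.span_of_finite ℝ (Set.finite_range z)
    set b := stdOrthonormalBasis ℝ S
    have hz : ∀ i, z i ∈ S := fun i => Submodule.subset_span (Set.mem_range_self i)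
    refine ⟨_, fun r i => (inner ℝ (⟨z i, hz i⟩ : S) (b r) : ℝ), fun i j => ?_⟩
    have := b.sum_inner_mul_inner (⟨z i, hz i⟩ : S) (⟨z j, hz j⟩ : S)
    rw [show (inner ℝ (z i) (z j) : ℝ) = (inner ℝ (⟨z i, hz i⟩ : S) (⟨z j, hz j⟩ : S) : ℝ) from rfl,
      ← this]
    refine Finset.sum_congr rfl fun r _ => ?_
    simp only
    rw [real_inner_comm (b r) (⟨z i, hz i⟩ : S), real_inner_comm (b r) (⟨z j, hz j⟩ : S)]
  set P : (Fin k → Fin m) → ι → ℝ := fun f i => ∏ t, a (f t) i with hP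
  have key : ∀ i j, (inner ℝ (z i) (z j) : ℝ) ^ k
      = ∑ f ∈ Fintype.piFinset (fun _ : Fin k => (univ : Finset (Fin m))),
          P f i * P f j := by
    intro i j
    rw [ha, ← Fin.prod_const k, Finset.prod_univ_sum]
    refine Finset.sum_congr rfl fun f _ => ?_
    rw [hP]; simp [Finset.prod_mul_distrib]
  calc (0:ℝ) ≤ ∑ f ∈ Fintype.piFinset (fun _ : Fin k => (univ : Finset (Fin m))),
        (∑ i, d i * P f i) ^ 2 := Finset.sum_nonneg fun f _ => sq_nonneg _
    _ = ∑ i, ∑ j, d i * d j * (inner ℝ (z i) (z j) : ℝ) ^ k := by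
        simp_rw [key, Finset.mul_sum, sq, Finset.sum_mul_sum]
        rw [Finset.sum_comm]
        refine Finset.sum_congr rfl fun i _ => ?_
        rw [Finset.sum_comm]
        refine Finset.sum_congr rfl fun j _ => ?_
        refine Finset.sum_congr rfl fun f _ => by ring

lemma gaussian_pd {H : Type*} [NormedAddCommGroup H] [InnerProductSpace ℝ H]
    {ι : Type*} [Fintype ι] (z : ι → H) (c : ι → ℝ) {t : ℝ} (ht : 0 ≤ t) :
    0 ≤ ∑ i, ∑ j, c i * c j * Real.exp (-(t * ‖z i - z j‖ ^ 2)) := by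
  set d : ι → ℝ := fun i => c i * Real.exp (-(t * ‖z i‖ ^ 2)) with hd
  have hexp : ∀ i j, c i * c j * Real.exp (-(t * ‖z i - z j‖ ^ 2))
      = d i * d j * Real.exp (2 * t * (inner ℝ (z i) (z j) : ℝ)) := by
    intro i j
    have hn : -(t * ‖z i - z j‖ ^ 2)
        = -(t * ‖z i‖ ^ 2) + -(t * ‖z j‖ ^ 2) + 2 * t * (inner ℝ (z i) (z j) : ℝ) := by
      rw [@norm_sub_sq_real]; ring
    rw [hd, hn, Real.exp_add, Real.exp_add]
    simp only
    ring
  simp_rw [hexp]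
  -- expand exp as a series
  have hser : ∀ u : ℝ, Real.exp u = ∑' k : ℕ, u ^ k / k ! := by
    intro u
    rw [Real.exp_eq_exp_ℝ, NormedSpace.exp_eq_tsum_div]
  have hsum : ∀ (a u : ℝ), Summable (fun k : ℕ => a * (u ^ k / k !)) :=
    fun a u => (Real.summable_pow_div_factorial u).mul_left a
  have step : ∀ i j, d i * d j * Real.exp (2 * t * (inner ℝ (z i) (z j) : ℝ))
      = ∑' k : ℕ, d i * d j * ((2 * t * (inner ℝ (z i) (z j) : ℝ)) ^ k / k !) := by
    intro i j
    rw [hser, ← tsum_mul_left]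
  simp_rw [step]
  rw [show (∑ i, ∑ j, ∑' k : ℕ, d i * d j * ((2 * t * (inner ℝ (z i) (z j) : ℝ)) ^ k / k !))
      = ∑ p ∈ (univ : Finset ι) ×ˢ (univ : Finset ι),
          ∑' k : ℕ, d p.1 * d p.2 * ((2 * t * (inner ℝ (z p.1) (z p.2) : ℝ)) ^ k / k !) from
    (Finset.sum_product' ..).symm]
  rw [← Summable.tsum_finsetSum (fun p _ => hsum _ _)]
  refine tsum_nonneg fun k => ?_
  rw [Finset.univ_product_univ, Fintype.sum_prod_type]
  have : ∀ i j : ι, d i * d j * ((2 * t * (inner ℝ (z i) (z j) : ℝ)) ^ k / k !)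
      = ((2 * t) ^ k / k !) * (d i * d j * (inner ℝ (z i) (z j) : ℝ) ^ k) := by
    intro i j; rw [mul_pow]; ring
  simp_rw [this, ← Finset.mul_sum]
  exact mul_nonneg (by positivity) (gram_pow_nonneg z d k)

lemma integrable_lam {l : ℝ} (hl : 0 ≤ l) :
    IntegrableOn (fun u : ℝ => (1 - Real.exp (-(u * l))) * u ^ (-(3:ℝ)/2)) (Ioi 0) := by
  have hmeas : Measurable (fun u : ℝ => (1 - Real.exp (-(u * l))) * u ^ (-(3:ℝ)/2)) := by
    fun_prop
  have h1 : IntegrableOn (fun u : ℝ => (1 - Real.exp (-(u * l))) * u ^ (-(3:ℝ)/2)) (Ioc 0 1) := by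
    have hint : IntegrableOn (fun u : ℝ => l * u ^ (-(1:ℝ)/2)) (Ioc 0 1) := by
      have := (intervalIntegral.intervalIntegrable_rpow' (a := 0) (b := 1)
        (r := -(1:ℝ)/2) (by norm_num)).1
      exact this.const_mul l
    refine Integrable.mono' hint hmeas.aestronglyMeasurable.restrict ?_
    refine (ae_restrict_iff' measurableSet_Ioc).2 (Filter.Eventually.of_forall fun u hu => ?_)
    obtain ⟨hu0, _⟩ := hu
    have he : 0 ≤ 1 - Real.exp (-(u * l)) := by
      simp [Real.exp_le_one_iff]
      positivity
    have hb : 1 - Real.exp (-(u * l)) ≤ u * l := by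
      nlinarith [Real.add_one_le_exp (-(u * l))]
    have hle : (0:ℝ) ≤ u ^ (-(3:ℝ)/2) := Real.rpow_nonneg hu0.le _
    rw [Real.norm_eq_abs, abs_of_nonneg (mul_nonneg he hle)]
    calc (1 - Real.exp (-(u * l))) * u ^ (-(3:ℝ)/2) ≤ (u * l) * u ^ (-(3:ℝ)/2) :=
          mul_le_mul_of_nonneg_right hb hle
      _ = l * u ^ (-(1:ℝ)/2) := by
          rw [show u * l * u ^ (-(3:ℝ)/2) = l * (u * u ^ (-(3:ℝ)/2)) by ring]
          congr 1
          nth_rewrite 1 [← Real.rpow_one u]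
          rw [← Real.rpow_add hu0]
          norm_num
  have h2 : IntegrableOn (fun u : ℝ => (1 - Real.exp (-(u * l))) * u ^ (-(3:ℝ)/2)) (Ioi 1) := by
    have hint : IntegrableOn (fun u : ℝ => u ^ (-(3:ℝ)/2)) (Ioi 1) :=
      integrableOn_Ioi_rpow_of_lt (by norm_num) one_pos
    refine Integrable.mono' hint hmeas.aestronglyMeasurable.restrict ?_
    refine (ae_restrict_iff' measurableSet_Ioi).2 (Filter.Eventually.of_forall fun u hu => ?_)
    have hu0 : (0:ℝ) < u := lt_trans one_pos hu
    have he : 0 ≤ 1 - Real.exp (-(u * l)) := by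
      simp [Real.exp_le_one_iff]
      positivity
    have he2 : 1 - Real.exp (-(u * l)) ≤ 1 := by
      have := Real.exp_pos (-(u * l)); linarith
    have hr : (0:ℝ) ≤ u ^ (-(3:ℝ)/2) := Real.rpow_nonneg hu0.le _
    rw [Real.norm_eq_abs, abs_of_nonneg (mul_nonneg he hr)]
    calc (1 - Real.exp (-(u * l))) * u ^ (-(3:ℝ)/2) ≤ 1 * u ^ (-(3:ℝ)/2) :=
          mul_le_mul_of_nonneg_right he2 hr
      _ = u ^ (-(3:ℝ)/2) := one_mul _
  have := h1.union h2
  rwa [Ioc_union_Ioi_eq_Ioi (by norm_num : (0:ℝ) ≤ 1)] at this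

noncomputable def Iconst : ℝ := ∫ u in Ioi (0:ℝ), (1 - Real.exp (-u)) * u ^ (-(3:ℝ)/2)

lemma Iconst_pos : 0 < Iconst := by
  rw [Iconst]
  have hnn : 0 ≤ᵐ[volume.restrict (Ioi (0:ℝ))]
      fun u : ℝ => (1 - Real.exp (-u)) * u ^ (-(3:ℝ)/2) := by
    refine (ae_restrict_iff' measurableSet_Ioi).2 (Filter.Eventually.of_forall fun u hu => ?_)
    have h1 : Real.exp (-u) < 1 := Real.exp_lt_one_iff.2 (by linarith [mem_Ioi.1 hu])
    have h2 := Real.rpow_nonneg (le_of_lt (mem_Ioi.1 hu)) (-(3:ℝ)/2)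
    have : 0 ≤ (1 - Real.exp (-u)) * u ^ (-(3:ℝ)/2) := mul_nonneg (by linarith) h2
    exact this
  have hint : IntegrableOn (fun u : ℝ => (1 - Real.exp (-u)) * u ^ (-(3:ℝ)/2)) (Ioi 0) := by
    have h := integrable_lam (zero_le_one (α := ℝ))
    simpa using h
  rw [setIntegral_pos_iff_support_of_nonneg_ae hnn hint]
  have hsub : Ioi (0:ℝ) ⊆ Function.support (fun u : ℝ => (1 - Real.exp (-u)) * u ^ (-(3:ℝ)/2)) := by
    intro u hu
    have hu0 := mem_Ioi.1 hu
    have h1 : Real.exp (-u) < 1 := Real.exp_lt_one_iff.2 (by linarith)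
    have h2 : (0:ℝ) < u ^ (-(3:ℝ)/2) := Real.rpow_pos_of_pos hu0 _
    exact ne_of_gt (mul_pos (by linarith) h2)
  have : Function.support (fun u : ℝ => (1 - Real.exp (-u)) * u ^ (-(3:ℝ)/2)) ∩ Set.Ioi (0:ℝ) = Set.Ioi (0:ℝ) :=
    inter_eq_self_of_subset_right hsub
  rw [this, Real.volume_Ioi]
  exact ENNReal.zero_lt_top

lemma scaling {s : ℝ} (hs : 0 ≤ s) :
    ∫ u in Ioi (0:ℝ), (1 - Real.exp (-(u * s ^ 2))) * u ^ (-(3:ℝ)/2) = s * Iconst := by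
  rcases eq_or_lt_of_le hs with h | h
  · simp [← h]
  · have hb : (0:ℝ) < s ^ 2 := by positivity
    set b := s ^ 2 with hbdef
    have key : ∀ u ∈ Ioi (0:ℝ), (1 - Real.exp (-(u * b))) * u ^ (-(3:ℝ)/2)
        = b ^ ((3:ℝ)/2) * ((1 - Real.exp (-(b * u))) * (b * u) ^ (-(3:ℝ)/2)) := by
      intro u hu
      have hu0 := mem_Ioi.1 hu
      rw [Real.mul_rpow hb.le hu0.le, mul_comm u b]
      rw [show b ^ ((3:ℝ)/2) * ((1 - Real.exp (-(b * u))) * (b ^ (-(3:ℝ)/2) * u ^ (-(3:ℝ)/2)))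
          = (b ^ ((3:ℝ)/2) * b ^ (-(3:ℝ)/2)) * ((1 - Real.exp (-(b * u))) * u ^ (-(3:ℝ)/2)) by ring]
      rw [← Real.rpow_add hb]
      norm_num
    rw [setIntegral_congr_fun measurableSet_Ioi key, integral_const_mul]
    have := integral_comp_mul_left_Ioi
      (fun v : ℝ => (1 - Real.exp (-v)) * v ^ (-(3:ℝ)/2)) 0 hb
    rw [mul_zero] at this
    rw [this, smul_eq_mul, ← Iconst]
    rw [show b ^ ((3:ℝ)/2) * (b⁻¹ * Iconst) = (b ^ ((3:ℝ)/2) * b⁻¹) * Iconst by ring]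
    congr 1
    rw [show b⁻¹ = b ^ (-1:ℝ) from (Real.rpow_neg_one b).symm, ← Real.rpow_add hb, hbdef,
      ← Real.rpow_natCast s 2, ← Real.rpow_mul hs]
    norm_num

lemma neg_type_weights {H : Type*} [NormedAddCommGroup H] [InnerProductSpace ℝ H]
    {ι : Type*} [Fintype ι] (z : ι → H) (c : ι → ℝ) (hc : ∑ i, c i = 0) :
    ∑ i, ∑ j, c i * c j * ‖z i - z j‖ ≤ 0 := by
  set F : ι → ι → ℝ → ℝ := fun i j u =>
    c i * c j * ((1 - Real.exp (-(u * ‖z i - z j‖ ^ 2))) * u ^ (-(3:ℝ)/2)) with hF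
  have hint : ∀ i j : ι, Integrable (F i j) (volume.restrict (Ioi 0)) :=
    fun i j => (integrable_lam (sq_nonneg _)).const_mul _
  have key : (∑ i, ∑ j, c i * c j * ‖z i - z j‖) * Iconst ≤ 0 := by
    have hrw : (∑ i, ∑ j, c i * c j * ‖z i - z j‖) * Iconst
        = ∑ i, ∑ j, ∫ u in Ioi (0:ℝ), F i j u := by
      rw [Finset.sum_mul]
      refine Finset.sum_congr rfl fun i _ => ?_
      rw [Finset.sum_mul]
      refine Finset.sum_congr rfl fun j _ => ?_
      rw [hF]
      simp only
      rw [integral_const_mul, scaling (norm_nonneg _)]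
      ring
    have hswap : (∑ i, ∑ j, ∫ u in Ioi (0:ℝ), F i j u)
        = ∫ u in Ioi (0:ℝ), ∑ i, ∑ j, F i j u := by
      calc ∑ i, ∑ j, ∫ u in Ioi (0:ℝ), F i j u
          = ∑ i, ∫ u in Ioi (0:ℝ), ∑ j, F i j u :=
            Finset.sum_congr rfl fun i _ =>
              (integral_finset_sum _ fun j _ => hint i j).symm
        _ = ∫ u in Ioi (0:ℝ), ∑ i, ∑ j, F i j u :=
            (integral_finset_sum _ fun i _ =>
              integrable_finset_sum _ fun j _ => hint i j).symm
    rw [hrw, hswap]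
    refine integral_nonpos_of_ae ?_
    refine (ae_restrict_iff' measurableSet_Ioi).2 (Filter.Eventually.of_forall fun u hu => ?_)
    have hu0 : (0:ℝ) < u := mem_Ioi.1 hu
    have hg := gaussian_pd z c hu0.le
    have hr : (0:ℝ) ≤ u ^ (-(3:ℝ)/2) := Real.rpow_nonneg hu0.le _
    have e1 : ∀ i j : ι, F i j u
        = (c i * c j - c i * c j * Real.exp (-(u * ‖z i - z j‖ ^ 2))) * u ^ (-(3:ℝ)/2) := by
      intro i j; rw [hF]; ring
    have e2 : (∑ i, ∑ j, F i j u)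
        = (∑ i, ∑ j, (c i * c j - c i * c j * Real.exp (-(u * ‖z i - z j‖ ^ 2)))) *
            u ^ (-(3:ℝ)/2) := by
      simp_rw [e1, ← Finset.sum_mul]
    have e3 : (∑ i, ∑ j, (c i * c j - c i * c j * Real.exp (-(u * ‖z i - z j‖ ^ 2))))
        = (∑ i, c i) * (∑ j, c j)
          - ∑ i, ∑ j, c i * c j * Real.exp (-(u * ‖z i - z j‖ ^ 2)) := by
      rw [Finset.sum_mul_sum]
      simp_rw [← Finset.sum_sub_distrib]
    have : (∑ i, ∑ j, (c i * c j - c i * c j * Real.exp (-(u * ‖z i - z j‖ ^ 2)))) ≤ 0 := by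
      rw [e3, hc]; simp; linarith
    rw [show (fun u => ∑ i, ∑ j, F i j u) u = ∑ i, ∑ j, F i j u from rfl, e2]
    exact mul_nonpos_iff.2 (Or.inr ⟨this, hr⟩)
  exact le_of_mul_le_mul_right (by rwa [zero_mul]) Iconst_pos

/-- Every (real) Hilbert space, with the metric induced by its norm, is of
negative type. -/
theorem hilbert_space_negative_type
    {H : Type*} [NormedAddCommGroup H] [InnerProductSpace ℝ H] [CompleteSpace H] :
    ∀ n : ℕ, ∀ x y : Fin n → H,
      2 * ∑ i, ∑ j, ‖x i - y j‖ ≥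
        ∑ i, ∑ j, (‖x i - x j‖ + ‖y i - y j‖) := by
  intro n x y
  set z : Fin n ⊕ Fin n → H := Sum.elim x y with hz
  set c : Fin n ⊕ Fin n → ℝ := Sum.elim (fun _ => 1) (fun _ => -1) with hcdef
  have hc : ∑ i, c i = 0 := by
    rw [Fintype.sum_sum_type]
    simp [hcdef]
  have h := neg_type_weights z c hc
  simp only [Fintype.sum_sum_type, hz, hcdef, Sum.elim_inl, Sum.elim_inr, one_mul, neg_mul,
    mul_neg, neg_neg, mul_one, one_mul, Finset.sum_add_distrib, Finset.sum_neg_distrib] at h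
  have hyx : ∑ b : Fin n, ∑ a : Fin n, ‖y b - x a‖ = ∑ a : Fin n, ∑ b : Fin n, ‖x a - y b‖ := by
    rw [Finset.sum_comm]
    exact Finset.sum_congr rfl fun a _ => Finset.sum_congr rfl fun b _ => norm_sub_rev _ _
  rw [ge_iff_le]
  simp_rw [Finset.sum_add_distrib]
  rw [hyx] at h
  linarith
end

section
/- Let (𝒳,d_𝒳) and (𝒴,d_𝒴) be 3-point metric spaces of strong negative type, and let X and Y be random variables with values in 𝒳 and 𝒴 respectively, with θ the joint law of (X,Y) on 𝒳 × 𝒴; if dcov(θ) = 0, then X and Y are independent. -/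
open Finset

/-- First marginal of a joint pmf on {0,1,2}². -/
def margX (θ : Fin 3 → Fin 3 → ℝ) : Fin 3 → ℝ := fun x => ∑ y, θ x y

/-- Second marginal of a joint pmf on {0,1,2}². -/
def margY (θ : Fin 3 → Fin 3 → ℝ) : Fin 3 → ℝ := fun y => ∑ x, θ x y

/-- Doubly-centred version of a metric `d` on {0,1,2} with respect to the
probability vector `μ`. -/
def centred (d : Fin 3 → Fin 3 → ℝ) (μ : Fin 3 → ℝ) : Fin 3 → Fin 3 → ℝ :=
  fun x x' => d x x' - (∑ z, d x z * μ z) - (∑ z, d x' z * μ z)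
    + ∑ w, (∑ z, d w z * μ z) * μ w

/-- Generalized distance covariance of a joint pmf θ on {0,1,2}² with respect
to metrics d𝒳, d𝒴 on the two factors. -/
def dcovPMF (d𝒳 d𝒴 : Fin 3 → Fin 3 → ℝ) (θ : Fin 3 → Fin 3 → ℝ) : ℝ :=
  ∑ x, ∑ y, ∑ x', ∑ y',
    centred d𝒳 (margX θ) x x' * centred d𝒴 (margY θ) y y' * θ x y * θ x' y'

def wa : Fin 3 → ℝ := ![1,-1,0]
def wb : Fin 3 → ℝ := ![0,1,-1]
def Bform (d : Fin 3 → Fin 3 → ℝ) (u v : Fin 3 → ℝ) : ℝ := ∑ i, ∑ j, d i j * u i * v j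

lemma strip_theta (d : Fin 3 → Fin 3 → ℝ) (hs : ∀ i j, d i j = d j i)
    (θ : Fin 3 → Fin 3 → ℝ) (y y' : Fin 3) :
    ∑ x, ∑ x', centred d (margX θ) x x' * θ x y * θ x' y' =
      ∑ x, ∑ x', d x x' * (θ x y - margX θ x * margY θ y) * (θ x' y' - margX θ x' * margY θ y') := by
  simp only [centred, margX, margY, Fin.sum_univ_three]
  rw [hs 1 0, hs 2 0, hs 2 1]
  ring

lemma strip0 (d : Fin 3 → Fin 3 → ℝ) (hs : ∀ i j, d i j = d j i) (μ u v : Fin 3 → ℝ)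
    (hu : u 0 + u 1 + u 2 = 0) (hv : v 0 + v 1 + v 2 = 0) :
    ∑ x, ∑ x', centred d μ x x' * u x * v x' = ∑ x, ∑ x', d x x' * u x * v x' := by
  simp only [centred, Fin.sum_univ_three]
  rw [hs 1 0, hs 2 0, hs 2 1]
  have h1 : u 1 = -u 0 - u 2 := by linarith
  have h2 : v 1 = -v 0 - v 2 := by linarith
  rw [h1, h2]; ring

lemma quad_expand (d : Fin 3 → Fin 3 → ℝ) (u v : Fin 3 → ℝ)
    (hu : u 0 + u 1 + u 2 = 0) (hv : v 0 + v 1 + v 2 = 0) :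
    ∑ i, ∑ j, d i j * u i * v j =
      Bform d wa wa * (u 0 * v 0) - Bform d wa wb * (u 0 * v 2)
      - Bform d wb wa * (u 2 * v 0) + Bform d wb wb * (u 2 * v 2) := by
  have h1 : u 1 = -u 0 - u 2 := by linarith
  have h2 : v 1 = -v 0 - v 2 := by linarith
  simp only [Bform, wa, wb, Fin.sum_univ_three, Matrix.cons_val_zero, Matrix.cons_val_one,
    Matrix.head_cons, Matrix.cons_val_two, Matrix.tail_cons]
  rw [h1, h2]; ring

lemma reorder (d𝒳 d𝒴 θ : Fin 3 → Fin 3 → ℝ) :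
    dcovPMF d𝒳 d𝒴 θ = ∑ y, ∑ y', centred d𝒴 (margY θ) y y' *
      ∑ x, ∑ x', centred d𝒳 (margX θ) x x' * θ x y * θ x' y' := by
  simp only [dcovPMF, Fin.sum_univ_three]
  ring


/-- If both 3-point factors carry metrics of strong negative type, then
vanishing of the generalized distance covariance of the joint law θ of (X,Y)
implies that X and Y are independent, i.e. θ is the product of its marginals. -/
theorem dcov_zero_implies_indep_three_point
    (d𝒳 d𝒴 : Fin 3 → Fin 3 → ℝ)
    -- d𝒳 is a metric:
    (hX0 : ∀ x, d𝒳 x x = 0) (hXsymm : ∀ x x', d𝒳 x x' = d𝒳 x' x)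
    (hXpos : ∀ x x', x ≠ x' → 0 < d𝒳 x x')
    (hXtri : ∀ x y z, d𝒳 x z ≤ d𝒳 x y + d𝒳 y z)
    -- d𝒴 is a metric:
    (hY0 : ∀ y, d𝒴 y y = 0) (hYsymm : ∀ y y', d𝒴 y y' = d𝒴 y' y)
    (hYpos : ∀ y y', y ≠ y' → 0 < d𝒴 y y')
    (hYtri : ∀ x y z, d𝒴 x z ≤ d𝒴 x y + d𝒴 y z)
    -- both spaces have (strong) negative type:
    (hXneg : ∀ v : Fin 3 → ℝ, ∑ i, v i = 0 →
      (∑ i, ∑ j, d𝒳 i j * v i * v j ≤ 0 ∧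
        ((∑ i, ∑ j, d𝒳 i j * v i * v j) = 0 → v = 0)))
    (hYneg : ∀ v : Fin 3 → ℝ, ∑ i, v i = 0 →
      (∑ i, ∑ j, d𝒴 i j * v i * v j ≤ 0 ∧
        ((∑ i, ∑ j, d𝒴 i j * v i * v j) = 0 → v = 0)))
    -- θ is a joint pmf:
    (θ : Fin 3 → Fin 3 → ℝ) (hθ : ∀ x y, 0 ≤ θ x y)
    (hθsum : ∑ x, ∑ y, θ x y = 1)
    (hdcov : dcovPMF d𝒳 d𝒴 θ = 0) :
    ∀ x y, θ x y = margX θ x * margY θ y := by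
  -- marginals sum to 1
  have hμ1 : margX θ 0 + margX θ 1 + margX θ 2 = 1 := by
    simpa [margX, Fin.sum_univ_three] using hθsum
  have hν1 : margY θ 0 + margY θ 1 + margY θ 2 = 1 := by
    have := hθsum
    simp only [Fin.sum_univ_three] at this
    simp only [margY, Fin.sum_univ_three]
    linarith
  -- the centred joint law
  set Δ : Fin 3 → Fin 3 → ℝ := fun x y => θ x y - margX θ x * margY θ y with hΔdef
  have hY3 : ∀ y, margY θ y = θ 0 y + θ 1 y + θ 2 y := by
    intro y; simp [margY, Fin.sum_univ_three]
  have hX3 : ∀ x, margX θ x = θ x 0 + θ x 1 + θ x 2 := by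
    intro x; simp [margX, Fin.sum_univ_three]
  have hcol : ∀ y, Δ 0 y + Δ 1 y + Δ 2 y = 0 := by
    intro y
    simp only [hΔdef]
    have := hY3 y
    linear_combination -this - margY θ y * hμ1
  have hrow : ∀ x : Fin 3, Δ x 0 + Δ x 1 + Δ x 2 = 0 := by
    intro x
    simp only [hΔdef]
    have := hX3 x
    linear_combination -this - margX θ x * hν1
  set α : Fin 3 → ℝ := fun y => Δ 0 y with hαdef
  set β : Fin 3 → ℝ := fun y => -Δ 2 y with hβdef
  have hαβ : ∀ y, Δ 1 y = β y - α y := by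
    intro y; have := hcol y; simp only [hαdef, hβdef]; linarith
  -- quadratic form constants
  set q11 : ℝ := -Bform d𝒳 wa wa with hq11def
  set q12 : ℝ := -Bform d𝒳 wa wb with hq12def
  set q21 : ℝ := -Bform d𝒳 wb wa with hq21def
  set q22 : ℝ := -Bform d𝒳 wb wb with hq22def
  have hq21eq : q21 = q12 := by
    simp only [hq21def, hq12def, Bform, wa, wb, Fin.sum_univ_three]
    simp [Matrix.cons_val_zero, Matrix.cons_val_one, Matrix.head_cons]
    linarith [hXsymm 0 1, hXsymm 0 2, hXsymm 1 2]
  have hwa0 : ∑ i, wa i = 0 := by simp [wa, Fin.sum_univ_three]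
  have hq11pos : 0 < q11 := by
    obtain ⟨hle, heq⟩ := hXneg wa hwa0
    rcases lt_or_eq_of_le hle with h | h
    · simp only [hq11def, Bform]; linarith
    · exfalso
      have hwa : wa = 0 := heq h
      have h0 := congrFun hwa 0
      simp [wa] at h0
  -- determinant positivity
  have hdet : 0 < q11 * q22 - q12 * q12 := by
    set v : Fin 3 → ℝ := fun i => q12 * wa i - q11 * wb i with hvdef
    have hv0 : ∑ i, v i = 0 := by simp [hvdef, wa, wb, Fin.sum_univ_three]
    obtain ⟨hle, heq⟩ := hXneg v hv0
    have hBvv : ∑ i, ∑ j, d𝒳 i j * v i * v j =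
        q12 * q12 * Bform d𝒳 wa wa - q12 * q11 * Bform d𝒳 wa wb
        - q11 * q12 * Bform d𝒳 wb wa + q11 * q11 * Bform d𝒳 wb wb := by
      simp only [hvdef, Bform, wa, wb, Fin.sum_univ_three, Matrix.cons_val_zero,
        Matrix.cons_val_one, Matrix.head_cons, Matrix.cons_val_two, Matrix.tail_cons]
      ring
    have hvne : v ≠ 0 := by
      intro h
      have := congrFun h 2
      simp [hvdef, wa, wb] at this
      linarith
    have hlt : ∑ i, ∑ j, d𝒳 i j * v i * v j < 0 := by
      rcases lt_or_eq_of_le hle with h | h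
      · exact h
      · exact absurd (heq h) hvne
    rw [hBvv] at hlt
    have hBaa : Bform d𝒳 wa wa = -q11 := by rw [hq11def]; ring
    have hBab : Bform d𝒳 wa wb = -q12 := by rw [hq12def]; ring
    have hBba : Bform d𝒳 wb wa = -q12 := by rw [← hq21eq, hq21def]; ring
    have hBbb : Bform d𝒳 wb wb = -q22 := by rw [hq22def]; ring
    rw [hBaa, hBab, hBba, hBbb] at hlt
    nlinarith [hq11pos]
  -- Step I+II: dcov in terms of the R-forms
  have hc : dcovPMF d𝒳 d𝒴 θ =
      -(q11 * (∑ y, ∑ y', d𝒴 y y' * α y * α y')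
        + q12 * (∑ y, ∑ y', d𝒴 y y' * α y * β y')
        + q21 * (∑ y, ∑ y', d𝒴 y y' * β y * α y')
        + q22 * (∑ y, ∑ y', d𝒴 y y' * β y * β y')) := by
    rw [reorder]
    have hG : ∀ y y', (∑ x, ∑ x', centred d𝒳 (margX θ) x x' * θ x y * θ x' y') =
        -(q11 * (α y * α y') + q12 * (α y * β y') + q21 * (β y * α y') + q22 * (β y * β y')) := by
      intro y y'
      rw [strip_theta d𝒳 hXsymm θ y y']
      have h1 : (∑ x, ∑ x', d𝒳 x x' *
          (θ x y - margX θ x * margY θ y) * (θ x' y' - margX θ x' * margY θ y')) =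
          ∑ i, ∑ j, d𝒳 i j * Δ i y * Δ j y' := by
        simp only [hΔdef]
      rw [h1, quad_expand d𝒳 (fun i => Δ i y) (fun j => Δ j y') (hcol y) (hcol y')]
      have e0 : Δ 0 y = α y := rfl
      have e0' : Δ 0 y' = α y' := rfl
      have e2 : Δ 2 y = -β y := by simp [hβdef]
      have e2' : Δ 2 y' = -β y' := by simp [hβdef]
      rw [e0, e0', e2, e2', hq11def, hq12def, hq21def, hq22def]
      ring
    calc (∑ y, ∑ y', centred d𝒴 (margY θ) y y' *
          ∑ x, ∑ x', centred d𝒳 (margX θ) x x' * θ x y * θ x' y')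
        = ∑ y, ∑ y', centred d𝒴 (margY θ) y y' *
            (-(q11 * (α y * α y') + q12 * (α y * β y') + q21 * (β y * α y')
              + q22 * (β y * β y'))) := by
          refine Finset.sum_congr rfl fun y _ => Finset.sum_congr rfl fun y' _ => ?_
          rw [hG y y']
      _ = -(q11 * (∑ y, ∑ y', centred d𝒴 (margY θ) y y' * α y * α y')
            + q12 * (∑ y, ∑ y', centred d𝒴 (margY θ) y y' * α y * β y')
            + q21 * (∑ y, ∑ y', centred d𝒴 (margY θ) y y' * β y * α y')
            + q22 * (∑ y, ∑ y', centred d𝒴 (margY θ) y y' * β y * β y')) := by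
          simp only [Fin.sum_univ_three]; ring
      _ = -(q11 * (∑ y, ∑ y', d𝒴 y y' * α y * α y')
            + q12 * (∑ y, ∑ y', d𝒴 y y' * α y * β y')
            + q21 * (∑ y, ∑ y', d𝒴 y y' * β y * α y')
            + q22 * (∑ y, ∑ y', d𝒴 y y' * β y * β y')) := by
          have hα0 : α 0 + α 1 + α 2 = 0 := by
            simp only [hαdef]; have := hrow 0; linarith
          have hβ0 : β 0 + β 1 + β 2 = 0 := by
            simp only [hβdef]; have := hrow 2; linarith
          rw [strip0 d𝒴 hYsymm (margY θ) α α hα0 hα0,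
              strip0 d𝒴 hYsymm (margY θ) α β hα0 hβ0,
              strip0 d𝒴 hYsymm (margY θ) β α hβ0 hα0,
              strip0 d𝒴 hYsymm (margY θ) β β hβ0 hβ0]
  -- the two nonnegative pieces
  have hα0 : α 0 + α 1 + α 2 = 0 := by
    simp only [hαdef]; have := hrow 0; linarith
  have hβ0 : β 0 + β 1 + β 2 = 0 := by
    simp only [hβdef]; have := hrow 2; linarith
  set f1 : Fin 3 → ℝ := fun y => q11 * α y + q12 * β y with hf1def
  have hf1sum : ∑ i, f1 i = 0 := by
    simp only [hf1def, Fin.sum_univ_three]; linear_combination q11 * hα0 + q12 * hβ0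
  have hβsum : ∑ i, β i = 0 := by
    simp only [Fin.sum_univ_three]; linarith
  obtain ⟨hle1, heq1⟩ := hYneg f1 hf1sum
  obtain ⟨hle2, heq2⟩ := hYneg β hβsum
  have hS1exp : ∑ i, ∑ j, d𝒴 i j * f1 i * f1 j =
      q11 * q11 * (∑ y, ∑ y', d𝒴 y y' * α y * α y')
      + q11 * q12 * (∑ y, ∑ y', d𝒴 y y' * α y * β y')
      + q12 * q11 * (∑ y, ∑ y', d𝒴 y y' * β y * α y')
      + q12 * q12 * (∑ y, ∑ y', d𝒴 y y' * β y * β y') := by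
    simp only [hf1def, Fin.sum_univ_three]; ring
  -- key linear relation
  have hkey : ∑ i, ∑ j, d𝒴 i j * f1 i * f1 j =
      -(q11 * q22 - q12 * q12) * (∑ i, ∑ j, d𝒴 i j * β i * β j) := by
    have h0 := hdcov
    rw [hc, hq21eq] at h0
    rw [hS1exp]
    linear_combination (-q11) * h0
  have hS2z : (∑ i, ∑ j, d𝒴 i j * β i * β j) = 0 := by
    have h2 : 0 ≤ (∑ i, ∑ j, d𝒴 i j * β i * β j) := by nlinarith [hdet, hle1, hkey]
    linarith [hle2]
  have hS1z : (∑ i, ∑ j, d𝒴 i j * f1 i * f1 j) = 0 := by rw [hkey, hS2z]; ring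
  have hβz : β = 0 := heq2 hS2z
  have hf1z : f1 = 0 := heq1 hS1z
  have hαz : ∀ y, α y = 0 := by
    intro y
    have h1 : f1 y = 0 := by rw [hf1z]; rfl
    have h2 : β y = 0 := by rw [hβz]; rfl
    simp only [hf1def] at h1
    have : q11 * α y = 0 := by rw [h2] at h1; linarith
    rcases mul_eq_zero.1 this with h | h
    · exact absurd h (ne_of_gt hq11pos)
    · exact h
  -- conclude
  intro x y
  have hΔz : ∀ x, Δ x y = 0 := by
    intro x
    have ha := hαz y
    have hb : β y = 0 := by rw [hβz]; rfl
    have h0 : Δ 0 y = 0 := ha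
    have h2 : Δ 2 y = 0 := by simp only [hβdef] at hb; linarith
    have h1 : Δ 1 y = 0 := by have := hcol y; linarith
    fin_cases x <;> assumption
  have := hΔz x
  simp only [hΔdef] at this
  linarith
end
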